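/- arXiv:2310.15974 — 4 statements merged into one kernel-verified Lean document; each statement's English description precedes it below -/
import Mathlib

section
/- Let n > 0 and d ≥ 0, and define the sequence by n₁ = n and n_j = n + n_{j-1}/(1 + n_{j-1}·d²) for j ≥ 2. Then the sequence (n_j) is monotonically non-decreasing in j and bounded above by n + 1/d² (when d > 0). -/
/-- The forward-learning effective sample size recursion `n₁ = n`,
`n_j = n + n_{j-1}/(1 + n_{j-1} d²)` is monotonically non-decreasing in `j`
and (when `d > 0`) bounded above by `n + 1/d²`. -/
theorem ess_recursion_monotone_bounded (n d : ℝ) (hn : 0 < n) (hd : 0 ≤ d)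
    (seq : ℕ → ℝ) (h1 : seq 1 = n)
    (hrec : ∀ j : ℕ, 2 ≤ j → seq j = n + seq (j - 1) / (1 + seq (j - 1) * d ^ 2)) :
    (∀ j : ℕ, 1 ≤ j → seq j ≤ seq (j + 1)) ∧
    (0 < d → ∀ j : ℕ, 1 ≤ j → seq j ≤ n + 1 / d ^ 2) := by
  have hd2 : 0 ≤ d ^ 2 := sq_nonneg d
  have hpos : ∀ j : ℕ, 1 ≤ j → n ≤ seq j := by
    intro j hj
    induction j with
    | zero => omega
    | succ k ih =>
      rcases Nat.lt_or_ge k 1 with hk | hk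
      · interval_cases k
        simp [h1]
      · have hs := ih hk
        have hrw := hrec (k + 1) (by omega)
        simp only [Nat.add_sub_cancel] at hrw
        have hden : 0 < 1 + seq k * d ^ 2 := by nlinarith
        have h0 : 0 ≤ seq k / (1 + seq k * d ^ 2) :=
          div_nonneg (by linarith) hden.le
        rw [hrw]; linarith
  have hmono : ∀ j : ℕ, 1 ≤ j → seq j ≤ seq (j + 1) := by
    intro j hj
    induction j with
    | zero => omega
    | succ k ih =>
      rcases Nat.lt_or_ge k 1 with hk | hk
      · interval_cases k
        have hrw := hrec 2 (by norm_num)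
        norm_num at hrw
        have hden : 0 < 1 + seq 1 * d ^ 2 := by
          have := hpos 1 le_rfl; nlinarith
        have h0 : 0 ≤ seq 1 / (1 + seq 1 * d ^ 2) :=
          div_nonneg (by have := hpos 1 le_rfl; linarith) hden.le
        rw [hrw, h1]; linarith [h0, h1 ▸ h0]
      · have hab : seq k ≤ seq (k + 1) := ih hk
        have ha : n ≤ seq k := hpos k hk
        have hb : n ≤ seq (k + 1) := hpos (k + 1) (by omega)
        have hra := hrec (k + 1) (by omega)
        have hrb := hrec (k + 2) (by omega)
        simp only [Nat.add_sub_cancel] at hra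
        have : k + 2 - 1 = k + 1 := by omega
        rw [this] at hrb
        have hda : 0 < 1 + seq k * d ^ 2 := by nlinarith
        have hdb : 0 < 1 + seq (k + 1) * d ^ 2 := by nlinarith
        have hdiv : seq k / (1 + seq k * d ^ 2) ≤
            seq (k + 1) / (1 + seq (k + 1) * d ^ 2) := by
          rw [div_le_div_iff₀ hda hdb]
          nlinarith
        rw [hra, hrb]; linarith
  refine ⟨hmono, ?_⟩
  intro hdpos j hj
  have hd2p : 0 < d ^ 2 := by positivity
  induction j with
  | zero => omega
  | succ k ih =>
    rcases Nat.lt_or_ge k 1 with hk | hk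
    · interval_cases k
      rw [h1]
      have : 0 < 1 / d ^ 2 := by positivity
      linarith
    · have hrw := hrec (k + 1) (by omega)
      simp only [Nat.add_sub_cancel] at hrw
      have ha : n ≤ seq k := hpos k hk
      have hda : 0 < 1 + seq k * d ^ 2 := by nlinarith
      have hdiv : seq k / (1 + seq k * d ^ 2) ≤ 1 / d ^ 2 := by
        rw [div_le_div_iff₀ hda hd2p]
        nlinarith
      rw [hrw]; linarith
end

section
/- Let n > 0, d > 0, and let α = 2/(√(1 + 4/(n·d²)) - 1). Define n₁^→ = n and suppose n_j^→ ≥ n + n_{j-1}^→/(1 + n_{j-1}^→·d²) for j ≥ 2, with equality allowed. Then for every j ≥ 1, n_j^→ ≥ n·(1 + ((1+α)^{2j-1} - 1 - α)/(α·(1+α)^{2j-1} + α)). -/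
/-!
The map `x ↦ n + x / (1 + x d²)` is increasing on `[0, ∞)`, so any sequence satisfying the
recursive inequality dominates the orbit of `n` under this map. Because `α² = n d² (α + 1)`, the
change of variables `x = n((α + 1)t - 1) / (α(t + 1))` conjugates the map to `t ↦ (1 + α)² t`,
and the orbit starts at `t = 1 + α`; this gives its closed form `(1 + α)^(2j-1)` in `t`.
-/

open Set

theorem MonotoneOn.seq_le_seq {β : Type*} [Preorder β] {f : β → β} {s : Set β}
    (hf : MonotoneOn f s) (hs : IsUpperSet s) {x y : ℕ → β} (hxs : ∀ k, x k ∈ s)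
    (h₀ : x 0 ≤ y 0) (hx : ∀ k, x (k + 1) ≤ f (x k)) (hy : ∀ k, f (y k) ≤ y (k + 1)) :
    ∀ k, x k ≤ y k
  | 0 => h₀
  | k + 1 => by
    have ih := hf.seq_le_seq hs hxs h₀ hx hy k
    exact (hx k).trans <| (hf (hxs k) (hs ih (hxs k)) ih).trans (hy k)

lemma monotoneOn_div_one_add_mul {c : ℝ} (hc : 0 ≤ c) :
    MonotoneOn (fun x => x / (1 + x * c)) (Ici 0) := by
  intro x hx y hy hxy
  simp only [mem_Ici] at hx hy
  rw [div_le_div_iff₀ (by positivity) (by positivity)]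
  nlinarith

lemma pos_and_sq_eq_of_eq_two_div_sqrt {K α : ℝ} (hK : 0 < K)
    (hα : α = 2 / (Real.sqrt (1 + 4 / K) - 1)) : 0 < α ∧ α ^ 2 = K * (α + 1) := by
  set s := Real.sqrt (1 + 4 / K)
  have hs2 : s ^ 2 = 1 + 4 / K := Real.sq_sqrt (by positivity)
  have hs1 : 1 < s := by
    rw [show (1 : ℝ) = Real.sqrt 1 by simp]
    exact Real.sqrt_lt_sqrt zero_le_one (by simp; positivity)
  have hs : s - 1 ≠ 0 := by linarith
  subst hα
  refine ⟨div_pos two_pos (by linarith), ?_⟩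
  field_simp
  field_simp at hs2
  linear_combination -hs2

/-- The bound of the theorem as a function of `t = (1 + α)^(2j-1)`. -/
noncomputable def forwardEssBound (n α t : ℝ) : ℝ := n * (1 + (t - 1 - α) / (α * t + α))

lemma forwardEssBound_eq (n : ℝ) {α t : ℝ} (hα : α ≠ 0) (ht : t + 1 ≠ 0) :
    forwardEssBound n α t = n * ((α + 1) * t - 1) / (α * (t + 1)) := by
  unfold forwardEssBound
  field_simp
  ring

lemma forwardEssBound_nonneg {n α t : ℝ} (hn : 0 ≤ n) (hα : 0 < α) (ht : 1 ≤ t) :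
    0 ≤ forwardEssBound n α t := by
  rw [forwardEssBound_eq n hα.ne' (by positivity)]
  have : 0 ≤ (α + 1) * t - 1 := by nlinarith
  positivity

lemma forwardEssBound_step {n α c t : ℝ} (hn : n ≠ 0) (hα : 0 < α) (ht : 0 ≤ t)
    (hc : α ^ 2 = n * c * (α + 1)) :
    n + forwardEssBound n α t / (1 + forwardEssBound n α t * c)
      = forwardEssBound n α ((1 + α) ^ 2 * t) := by
  have hden :
      1 + forwardEssBound n α t * c = ((1 + α) ^ 2 * t + 1) / ((α + 1) * (t + 1)) := by
    obtain rfl : c = α ^ 2 / (n * (α + 1)) := by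
      rw [eq_div_iff (by positivity)]
      linear_combination -hc
    rw [forwardEssBound_eq n hα.ne' (by positivity)]
    field_simp
    ring
  rw [hden, forwardEssBound_eq n hα.ne' (by positivity),
    forwardEssBound_eq n hα.ne' (by positivity)]
  field_simp
  ring

/-- Closed-form lower bound for the effective sample size under forward learning:
if `n₁^→ = n` and `n_j^→ ≥ n + n_{j-1}^→/(1 + n_{j-1}^→ d²)` for `j ≥ 2`, then
with `α = 2/(√(1 + 4/(n d²)) - 1)`,
`n_j^→ ≥ n (1 + ((1+α)^{2j-1} - 1 - α)/(α (1+α)^{2j-1} + α))` for every `j ≥ 1`. -/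
theorem forward_ess_lower_bound (n d : ℝ) (hn : 0 < n) (hd : 0 < d)
    (seq : ℕ → ℝ) (h1 : seq 1 = n)
    (hrec : ∀ j : ℕ, 2 ≤ j → seq j ≥ n + seq (j - 1) / (1 + seq (j - 1) * d ^ 2)) :
    ∀ j : ℕ, 1 ≤ j →
      seq j ≥ n * (1 +
        ((1 + 2 / (Real.sqrt (1 + 4 / (n * d ^ 2)) - 1)) ^ (2 * j - 1) - 1 -
            2 / (Real.sqrt (1 + 4 / (n * d ^ 2)) - 1)) /
          (2 / (Real.sqrt (1 + 4 / (n * d ^ 2)) - 1) *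
              (1 + 2 / (Real.sqrt (1 + 4 / (n * d ^ 2)) - 1)) ^ (2 * j - 1) +
            2 / (Real.sqrt (1 + 4 / (n * d ^ 2)) - 1))) := by
  set α := 2 / (Real.sqrt (1 + 4 / (n * d ^ 2)) - 1) with hα_def
  obtain ⟨hα, hαsq⟩ := pos_and_sq_eq_of_eq_two_div_sqrt (by positivity) hα_def
  intro j hj
  obtain ⟨k, rfl⟩ := Nat.exists_eq_add_of_le' hj
  rw [show 2 * (k + 1) - 1 = 2 * k + 1 by omega]
  refine ((monotoneOn_div_one_add_mul (sq_nonneg d)).const_add n).seq_le_seq (isUpperSet_Ici 0)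
    (x := fun k => forwardEssBound n α ((1 + α) ^ (2 * k + 1))) (y := fun k => seq (k + 1))
    (fun k => forwardEssBound_nonneg hn.le hα (one_le_pow₀ (by linarith))) ?_ ?_ ?_ k
  · simp [forwardEssBound, h1]
  · intro k
    rw [forwardEssBound_step hn.ne' hα (by positivity) hαsq, ← pow_add,
      show 2 + (2 * k + 1) = 2 * (k + 1) + 1 by ring]
  · intro k
    simpa using hrec (k + 2) (by omega)
end

section
/- Let n > 0, d > 0, j ≥ 1 an integer with n·d² < 1/j², and let α = 2/(√(1 + 4/(n·d²)) - 1). Then the forward-learning ESS bound satisfies n·(1 + ((1+α)^{2j-1} - 1 - α)/(α·(1+α)^{2j-1} + α)) ≥ n·(1 + (j-1)/(1+φ)) ≥ n·(1 + (j-1)/3), where φ is the golden ratio. -/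
/-!
With `x = n d²`, `α` is the positive root of `α² = x (1 + α)`. For `u = α j` the smallness
condition `x j² < 1` gives `u² = x j² (1 + α) < 1 + α ≤ 1 + u`, so `u < φ`. Writing `j = k + 1`,
Bernoulli's inequality gives `(1 + α)^(2k+1) ≥ (1 + α)(1 + 2kα)`; since the gain
`(t - 1 - α) / (α t + α)` increases with `t`, this bound together with `(k + 1) α ≤ φ` yields a
gain of at least `k / (1 + φ)`, and `φ < 2` gives the last inequality.
-/

open Real goldenRatio

theorem lt_goldenRatio_of_sq_lt {u : ℝ} (h : u ^ 2 < u + 1) : u < φ := by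
  by_contra! hφu
  nlinarith [mul_nonneg (sub_nonneg.2 hφu) (by linarith [one_lt_goldenRatio] : 0 ≤ u + φ - 1),
    goldenRatio_sq]

theorem pos_and_sq_eq_mul_one_add {x α : ℝ} (hx : 0 < x)
    (hα : α = 2 / (√(1 + 4 / x) - 1)) : 0 < α ∧ α ^ 2 = x * (1 + α) := by
  set s := √(1 + 4 / x)
  have hs2 : s ^ 2 = 1 + 4 / x := sq_sqrt (by positivity)
  have hs1 : 1 < s := by
    rw [show (1 : ℝ) = √1 by simp]
    exact sqrt_lt_sqrt zero_le_one (by simp; positivity)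
  have hα0 : 0 < α := hα ▸ div_pos two_pos (sub_pos.2 hs1)
  refine ⟨hα0, ?_⟩
  have hαs : α * (s - 1) = 2 := by rw [hα]; field_simp [(sub_pos.2 hs1).ne']
  field_simp at hs2
  linear_combination (x * (α * s + 2 + α) * hαs - α ^ 2 * hs2) / 4

theorem mul_lt_goldenRatio {x α c : ℝ} (hα : 0 < α) (hαx : α ^ 2 = x * (1 + α)) (hc : 1 ≤ c)
    (hsmall : x < 1 / c ^ 2) : α * c < φ := by
  have hxc : x * c ^ 2 < 1 := (lt_div_iff₀ (by positivity)).1 hsmall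
  refine lt_goldenRatio_of_sq_lt ?_
  calc (α * c) ^ 2 = x * c ^ 2 * (1 + α) := by rw [mul_pow, hαx]; ring
    _ < 1 + α := by nlinarith
    _ ≤ α * c + 1 := by nlinarith

theorem div_one_add_le_of_succ_mul_le {α c : ℝ} {k : ℕ} (hα : 0 < α) (hc : (k + 1) * α ≤ c) :
    k / (1 + c) ≤ ((1 + α) ^ (2 * k + 1) - 1 - α) / (α * (1 + α) ^ (2 * k + 1) + α) := by
  have hk : (0 : ℝ) ≤ k * α := by positivity
  have hc0 : 0 < c := lt_of_lt_of_le (by positivity) hc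
  set t := (1 + α) ^ (2 * k + 1)
  have hbern : (1 + α) * (1 + 2 * k * α) ≤ t := by
    have := one_add_mul_le_pow (by linarith : (-2 : ℝ) ≤ α) (2 * k)
    push_cast at this
    calc (1 + α) * (1 + 2 * k * α) ≤ (1 + α) * (1 + α) ^ (2 * k) := by gcongr
      _ = t := (pow_succ' _ _).symm
  have hA : 1 + α ≤ 1 + c - k * α := by linarith
  rw [div_le_div_iff₀ (by linarith) (by positivity)]
  -- with `A = 1 + c - kα ≥ 1 + α`, the inequality reduces to `kα (2A(1 + α) - 2 - α) ≥ 0`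
  nlinarith [mul_le_mul_of_nonneg_left hbern (by linarith : 0 ≤ 1 + c - k * α),
    mul_nonneg (mul_nonneg hk (sub_nonneg.2 hA)) (by linarith : (0 : ℝ) ≤ 1 + α),
    mul_nonneg hk (by positivity : 0 ≤ α * (3 + 2 * α))]

/-- In the regime `n d² < 1/j²`, the forward-learning ESS bound with
`α = 2/(√(1 + 4/(n d²)) - 1)` satisfies
`n (1 + ((1+α)^{2j-1} - 1 - α)/(α(1+α)^{2j-1} + α)) ≥ n (1 + (j-1)/(1+φ))
 ≥ n (1 + (j-1)/3)`, where `φ = (1+√5)/2` is the golden ratio. -/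
theorem forward_ess_linear_growth (n d : ℝ) (hn : 0 < n) (hd : 0 < d)
    (j : ℕ) (hj : 1 ≤ j) (hsmall : n * d ^ 2 < 1 / (j : ℝ) ^ 2)
    (α : ℝ) (hα : α = 2 / (Real.sqrt (1 + 4 / (n * d ^ 2)) - 1)) :
    n * (1 + ((1 + α) ^ (2 * j - 1) - 1 - α) / (α * (1 + α) ^ (2 * j - 1) + α)) ≥
        n * (1 + ((j : ℝ) - 1) / (1 + (1 + Real.sqrt 5) / 2)) ∧
    n * (1 + ((j : ℝ) - 1) / (1 + (1 + Real.sqrt 5) / 2)) ≥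
        n * (1 + ((j : ℝ) - 1) / 3) := by
  obtain ⟨hα0, hαsq⟩ := pos_and_sq_eq_mul_one_add (by positivity) hα
  have hαj : α * j < φ := mul_lt_goldenRatio hα0 hαsq (by exact_mod_cast hj) hsmall
  obtain ⟨k, rfl⟩ := Nat.exists_eq_add_of_le' hj
  rw [show 2 * (k + 1) - 1 = 2 * k + 1 by omega]
  push_cast at hαj ⊢
  simp only [add_sub_cancel_right]
  constructor
  · have hgain := div_one_add_le_of_succ_mul_le (k := k) (c := φ) hα0 (by linarith)
    gcongr
  · have hφ : (1 + √5) / 2 < 2 := goldenRatio_lt_two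
    gcongr
    linarith
end

section
/- For real α with 0 < α ≤ φ/j (φ the golden ratio, j ≥ 1 an integer), the inequality ((1+α)^{2j} - 1)/(α(1+α)^{2j-1} + α) ≥ (2j-2)/(2 + α(2j-1)) ≥ (j-1)/(1+φ) holds. -/
/-- For `0 < α ≤ φ/j` with `φ` the golden ratio and `j ≥ 1` an integer,
`((1+α)^{2j} - 1)/(α(1+α)^{2j-1} + α) ≥ (2j-2)/(2 + α(2j-1)) ≥ (j-1)/(1+φ)`. -/
theorem ess_gain_inequality_chain (α : ℝ) (j : ℕ) (hj : 1 ≤ j) (hα0 : 0 < α)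
    (hα : α ≤ (1 + Real.sqrt 5) / 2 / (j : ℝ)) :
    ((1 + α) ^ (2 * j) - 1) / (α * (1 + α) ^ (2 * j - 1) + α) ≥
        (2 * (j : ℝ) - 2) / (2 + α * (2 * (j : ℝ) - 1)) ∧
    (2 * (j : ℝ) - 2) / (2 + α * (2 * (j : ℝ) - 1)) ≥
        ((j : ℝ) - 1) / (1 + (1 + Real.sqrt 5) / 2) := by
  have hJ : (1 : ℝ) ≤ (j : ℝ) := by exact_mod_cast hj
  have hs5 : (2 : ℝ) ≤ Real.sqrt 5 := by
    nlinarith [Real.sq_sqrt (by norm_num : (5:ℝ) ≥ 0), Real.sqrt_nonneg 5]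
  have hd1 : (0 : ℝ) < 2 + α * (2 * (j : ℝ) - 1) := by nlinarith
  have hxpos : (0:ℝ) < 1 + α := by linarith
  have hpow_pos : (0:ℝ) < (1 + α) ^ (2 * j - 1) := pow_pos hxpos _
  have hd2 : (0:ℝ) < α * (1 + α) ^ (2 * j - 1) + α := by positivity
  have hsucc : 2 * j = (2 * j - 1) + 1 := by omega
  have hcast : ((2 * j - 1 : ℕ) : ℝ) = 2 * (j : ℝ) - 1 := by
    have : (2 * j - 1 : ℕ) = 2 * j - 1 := rfl
    push_cast [Nat.cast_sub (by omega : 1 ≤ 2 * j)]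
    ring
  have hbern : 1 + (2 * (j : ℝ) - 1) * α ≤ (1 + α) ^ (2 * j - 1) := by
    have := one_add_mul_le_pow (by linarith : (-2:ℝ) ≤ α) (2 * j - 1)
    rwa [hcast] at this
  constructor
  · rw [ge_iff_le, div_le_div_iff₀ hd1 hd2]
    have hexp : (1 + α) ^ (2 * j) = (1 + α) * (1 + α) ^ (2 * j - 1) := by
      rw [hsucc, pow_succ, mul_comm]; norm_num
    rw [hexp]
    set t := (1 + α) ^ (2 * j - 1) with ht
    nlinarith [mul_nonneg hα0.le (sub_nonneg.mpr hbern), sq_nonneg α,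
      mul_nonneg (mul_nonneg hα0.le hα0.le) (by linarith : (0:ℝ) ≤ 2 * (j:ℝ) - 1),
      mul_nonneg hα0.le (by linarith : (0:ℝ) ≤ (j:ℝ) - 1)]
  · have hφpos : (0:ℝ) < 1 + (1 + Real.sqrt 5) / 2 := by nlinarith
    rw [ge_iff_le, div_le_div_iff₀ hφpos hd1]
    have hjpos : (0:ℝ) < (j:ℝ) := by linarith
    have hαj : α * (j:ℝ) ≤ (1 + Real.sqrt 5) / 2 := (le_div_iff₀ hjpos).mp hα
    nlinarith [mul_nonneg (sub_nonneg.mpr hJ) (sub_nonneg.mpr hαj),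
      mul_nonneg hα0.le (sub_nonneg.mpr hJ)]
end
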